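/- Let Υ and Υ' be unital, norm-contracting linear maps 𝒜 → 𝒜 that preserve almost locality with functions m_1 ∈ 𝓜 and m_2 ∈ 𝓜 respectively. Then Υ' ∘ Υ preserves almost locality with some m ∈ 𝓜 depending only on m_1, m_2, d, C_Γ. -/

import Mathlib

open scoped BigOperators ComplexOrder Matrix

noncomputable section

namespace Stability

/-- The class `𝓜` of quasi-exponentially decaying functions: non-increasing, nonnegative,
and bounded by `C_α e^{-c_α r^α}` for every `0 < α < 1` (for positive arguments). -/
def InM (m : ℕ → ℝ) : Prop :=
  (∀ r, 0 ≤ m r) ∧ (∀ r s : ℕ, r ≤ s → m s ≤ m r) ∧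
    ∀ α : ℝ, 0 < α → α < 1 →
      ∃ C c : ℝ, 0 < C ∧ 0 < c ∧ ∀ r : ℕ, 1 ≤ r → m r ≤ C * Real.exp (-(c * (r : ℝ) ^ α))

variable {Γ : Type} [Fintype Γ] [DecidableEq Γ]

/-- The ball of radius `r` around `x` for the graph distance. -/
def ball (G : SimpleGraph Γ) (x : Γ) (r : ℕ) : Finset Γ :=
  Finset.univ.filter fun y => G.dist x y ≤ r

open Classical in
/-- The ball of a real radius `t` around `x` for the graph distance. -/
def ballR (G : SimpleGraph Γ) (x : Γ) (t : ℝ) : Finset Γ :=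
  Finset.univ.filter fun y => (G.dist x y : ℝ) ≤ t

/-- `Γ` has dimension `d` with constant `CΓ`:  `|B_r(x)| ≤ 1 + CΓ r^d`. -/
def HasDim (G : SimpleGraph Γ) (d : ℕ) (CΓ : ℝ) : Prop :=
  ∀ (x : Γ) (r : ℕ), ((ball G x r).card : ℝ) ≤ 1 + CΓ * (r : ℝ) ^ d

/-- Distance between two sets of vertices (junk value `0` if one of them is empty). -/
def setDist (G : SimpleGraph Γ) (X Y : Finset Γ) : ℕ :=
  sInf {n : ℕ | ∃ x ∈ X, ∃ y ∈ Y, G.dist x y = n}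

/-- Distance from a point to a set. -/
def ptDist (G : SimpleGraph Γ) (x : Γ) (Y : Finset Γ) : ℕ := setDist G {x} Y

/-- Diameter of a finite set of vertices. -/
def diam (G : SimpleGraph Γ) (X : Finset Γ) : ℕ :=
  sSup {n : ℕ | ∃ x ∈ X, ∃ y ∈ X, G.dist x y = n}

/-- The fattening `(Z)_r` of a set `Z`. -/
def fatten (G : SimpleGraph Γ) (Z : Finset Γ) (r : ℕ) : Finset Γ :=
  Finset.univ.filter fun x => ∃ z ∈ Z, G.dist x z ≤ r

/-- The boundary `∂Z = (Z)_1 ∩ (Z^c)_1` of a set `Z`. -/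
def boundary (G : SimpleGraph Γ) (Z : Finset Γ) : Finset Γ :=
  fatten G Z 1 ∩ fatten G Zᶜ 1

/-- The rank-one operator `|ψ⟩⟨ψ|` of a vector. -/
def rankOne {ι : Type} (ψ : ι → ℂ) : Matrix ι ι ℂ := fun a b => ψ a * star (ψ b)

/-- `ψ` is a unit vector for the `ℓ²` norm. -/
def UnitVec {ι : Type} [Fintype ι] (ψ : ι → ℂ) : Prop := ∑ a, Complex.normSq (ψ a) = 1

/-- Operator norm of a matrix, acting on the Euclidean (ℓ²) space. -/
def opNorm {ι : Type} [Fintype ι] [DecidableEq ι] (A : Matrix ι ι ℂ) : ℝ :=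
  ‖Matrix.toEuclideanCLM (𝕜 := ℂ) A‖

/-- Trace norm `‖A‖₁ = tr √(AᴴA)` of a matrix. -/
def traceNorm {ι : Type} [Fintype ι] [DecidableEq ι] (A : Matrix ι ι ℂ) : ℝ :=
  ((Matrix.posSemidef_conjTranspose_mul_self A).1.eigenvectorUnitary.1 *
    Matrix.diagonal (fun i => ((Real.sqrt ((Matrix.posSemidef_conjTranspose_mul_self A).1.eigenvalues i) : ℝ) : ℂ)) *
    (star (Matrix.posSemidef_conjTranspose_mul_self A).1.eigenvectorUnitary : Matrix ι ι ℂ)).trace.re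

/-- `γ(A) = min (spec(A) \ {0})` (junk value if the set has no infimum in `ℝ`). -/
def mingap {ι : Type} [Fintype ι] [DecidableEq ι] (A : Matrix ι ι ℂ) : ℝ :=
  sInf {t : ℝ | t ≠ 0 ∧ (t : ℂ) ∈ spectrum ℂ A}

/-- `P` is the orthogonal projector onto the kernel of `A`. -/
def IsKerProj {ι : Type} [Fintype ι] [DecidableEq ι] (A P : Matrix ι ι ℂ) : Prop :=
  P.IsHermitian ∧ P * P = P ∧ A * P = 0 ∧ ∀ v : ι → ℂ, A.mulVec v = 0 → P.mulVec v = v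

section ops

variable (κ : Γ → Type) [∀ x, Fintype (κ x)] [∀ x, DecidableEq (κ x)]

/-- Configurations of the whole system; `ℋ = ℂ^(Cfg κ)`. -/
abbrev Cfg : Type := ∀ x : Γ, κ x

/-- Configurations of the subsystem in the region `X`. -/
abbrev SubCfg (X : Finset Γ) : Type := ∀ x : X, κ x

/-- Observables on the whole system: `𝒜 = B(ℋ)`. -/
abbrev Op : Type := Matrix (Cfg κ) (Cfg κ) ℂ

/-- Embedding `𝒜_X → 𝒜`, `O ↦ O ⊗ 1_{X^c}`. -/
def embed (X : Finset Γ) (O : Matrix (SubCfg κ X) (SubCfg κ X) ℂ) : Op κ := fun a b =>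
  if ∀ x, x ∉ X → a x = b x then O (fun x => a x.1) (fun x => b x.1) else 0

/-- `A` is supported in the region `X`. -/
def SupportedIn (X : Finset Γ) (A : Op κ) : Prop := ∃ O, A = embed κ X O

/-- Glue a configuration on `X` and one on `Xᶜ` to a global configuration. -/
def glue (X : Finset Γ) (a : SubCfg κ X) (c : SubCfg κ Xᶜ) : Cfg κ := fun x =>
  if h : x ∈ X then a ⟨x, h⟩ else c ⟨x, Finset.mem_compl.mpr h⟩

/-- Partial trace `tr_{X^c} : 𝒜 → 𝒜_X`. -/
def ptrace (X : Finset Γ) (A : Op κ) : Matrix (SubCfg κ X) (SubCfg κ X) ℂ := fun a b =>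
  ∑ c : SubCfg κ Xᶜ, A (glue κ X a c) (glue κ X b c)

/-- The local trace norm `|A|_X = ‖tr_{X^c} A‖₁`. -/
def locNorm (X : Finset Γ) (A : Op κ) : ℝ := traceNorm (ptrace κ X A)

/-- Expectation value `⟨A⟩_ρ = tr(ρ A)` (real part). -/
def expVal (ρ A : Op κ) : ℝ := ((ρ * A).trace).re

/-- `ρ` is a density matrix. -/
def IsDensity (ρ : Op κ) : Prop := ρ.PosSemidef ∧ ρ.trace = 1

/-- An interaction: a collection of self-adjoint operators `q_X` supported in `X`. -/
def IsInteraction (q : Finset Γ → Op κ) : Prop :=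
  ∀ X, (q X).IsHermitian ∧ SupportedIn κ X (q X)

/-- `‖q‖_m ≤ C` where `‖q‖_m = sup_x Σ_{X ∋ x} ‖q_X‖ / m(1 + diam X)`. -/
def intNormLE (G : SimpleGraph Γ) (m : ℕ → ℝ) (q : Finset Γ → Op κ) (C : ℝ) : Prop :=
  ∀ x : Γ, ∑ X ∈ Finset.univ.filter (fun X : Finset Γ => x ∈ X),
      opNorm (q X) / m (1 + diam G X) ≤ C

/-- `|||q|||_F ≤ C` where `|||q|||_F = sup_{x,y} Σ_{S ⊇ {x,y}} ‖q_S‖ / F(dist(x,y))`. -/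
def fNormLE (G : SimpleGraph Γ) (F : ℕ → ℝ) (q : Finset Γ → Op κ) (C : ℝ) : Prop :=
  ∀ x y : Γ, ∑ S ∈ Finset.univ.filter (fun S : Finset Γ => x ∈ S ∧ y ∈ S),
      opNorm (q S) / F (G.dist x y) ≤ C

/-- The global Hamiltonian `H = Σ_X h_X`. -/
def ham (h : Finset Γ → Op κ) : Op κ := ∑ X : Finset Γ, h X

/-- The OBC restriction `H_Z = Σ_{X ⊆ Z} h_X`. -/
def hamOn (h : Finset Γ → Op κ) (Z : Finset Γ) : Op κ :=
  ∑ X ∈ Finset.univ.filter (fun X : Finset Γ => X ⊆ Z), h X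

/-- The conditional expectation `𝔼_{Y^c} : 𝒜 → 𝒜_Y`, `O ↦ (tr_{Y^c} O / dim ℋ_{Y^c}) ⊗ 1_{Y^c}`.
Applied to a density matrix it yields `tr_{Y^c}(ρ) ⊗ ι_{Y^c}` with `ι` the normalized trace. -/
def condExp (Y : Finset Γ) (A : Op κ) : Op κ := fun a b =>
  if ∀ x, x ∉ Y → a x = b x then
    ptrace κ Y A (fun x => a x.1) (fun x => b x.1) / (Fintype.card (SubCfg κ Yᶜ) : ℂ)
  else 0

/-- Tensor product of an operator on `Z` with an operator on `Z^c`. -/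
def cutTensor (Z : Finset Γ) (A : Matrix (SubCfg κ Z) (SubCfg κ Z) ℂ)
    (B : Matrix (SubCfg κ Zᶜ) (SubCfg κ Zᶜ) ℂ) : Op κ := fun a b =>
  A (fun x => a x.1) (fun x => b x.1) * B (fun x => a x.1) (fun x => b x.1)

/-- `tr_{Z^c}(μ) ⊗ tr_Z(ρ)`. -/
def splitState (Z : Finset Γ) (μ ρ : Op κ) : Op κ :=
  cutTensor κ Z (ptrace κ Z μ) (ptrace κ Zᶜ ρ)

/-- `Φ` is a ground state of the (self-adjoint) matrix `A`: a unit eigenvector whose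
eigenvalue is the minimum of the spectrum. -/
def IsGroundState (A : Op κ) (ψ : Cfg κ → ℂ) : Prop :=
  UnitVec ψ ∧ ∃ lam : ℝ, A.mulVec ψ = (lam : ℂ) • ψ ∧ ∀ z ∈ spectrum ℂ A, lam ≤ z.re

end ops

/-- The Choi matrix of a map on matrices. -/
def choi {ι : Type} [Fintype ι] [DecidableEq ι] (Φ : Matrix ι ι ℂ → Matrix ι ι ℂ) :
    Matrix (ι × ι) (ι × ι) ℂ := fun p q => Φ (Matrix.single p.1 q.1 1) p.2 q.2

/-- `Φ` is a trace-preserving completely positive map (complete positivity via Choi's theorem). -/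
def IsCPTP {ι : Type} [Fintype ι] [DecidableEq ι] (Φ : Matrix ι ι ℂ → Matrix ι ι ℂ) : Prop :=
  IsLinearMap ℂ Φ ∧ (choi Φ).PosSemidef ∧ ∀ A, (Φ A).trace = A.trace

section stitching

variable (κ : Γ → Type) [∀ x, Fintype (κ x)] [∀ x, DecidableEq (κ x)]

/-- Definition of a family of stitching maps `Σ_Z` with function `m`, for the state `μ`. -/
def IsStitching (G : SimpleGraph Γ) (μ : Op κ) (S : Finset Γ → Op κ → Op κ) (m : ℕ → ℝ) :
    Prop :=
  (∀ Z, IsCPTP (S Z)) ∧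
    (∀ Z X : Finset Γ, ∀ ρ : Op κ, IsDensity κ ρ →
      locNorm κ X (S Z ρ - splitState κ Z μ ρ) ≤
        (X.card : ℝ) * m (setDist G (boundary G Z) X)) ∧
    (∀ Z X : Finset Γ, ∀ r : ℕ, 1 ≤ r → ∀ ρ ω : Op κ, IsDensity κ ρ → IsDensity κ ω →
      locNorm κ X (S Z ρ - S Z ω) ≤
        locNorm κ (fatten G X r) (ρ - ω) + (X.card : ℝ) * m r) ∧
    (∀ Z, S Z μ = μ)

/-- A map on observables preserves almost locality with function `m`. -/
def PreservesAlmostLocality (G : SimpleGraph Γ) (T : Op κ → Op κ) (m : ℕ → ℝ) : Prop :=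
  ∀ (X : Finset Γ) (r : ℕ), 1 ≤ r → ∀ O : Op κ, SupportedIn κ X O →
    opNorm (T O - condExp κ (fatten G X r) (T O)) ≤ opNorm O * (X.card : ℝ) * m r

end stitching

section aux

variable (κ κ' : Γ → Type)
variable [∀ x, Fintype (κ x)] [∀ x, DecidableEq (κ x)]
variable [∀ x, Fintype (κ' x)] [∀ x, DecidableEq (κ' x)]

/-- Sites of the enlarged system `𝓗̃ = ℋ ⊗ ℋ'`. -/
abbrev AuxSites : Γ → Type := fun x => κ x × κ' x

/-- Tensor product of vectors `ψ ⊗ ψ'` in `𝓗̃`. -/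
def tensorVec (ψ : Cfg κ → ℂ) (ψ' : Cfg κ' → ℂ) : Cfg (AuxSites κ κ') → ℂ := fun a =>
  ψ (fun x => (a x).1) * ψ' (fun x => (a x).2)

/-- Tensor product of operators `ρ ⊗ ρ'` on `𝓗̃`. -/
def tensorOp (ρ : Op κ) (ρ' : Op κ') : Op (AuxSites κ κ') := fun a b =>
  ρ (fun x => (a x).1) (fun x => (b x).1) * ρ' (fun x => (a x).2) (fun x => (b x).2)

/-- Partial trace over the auxiliary space, `tr_{ℋ'} : B(𝓗̃) → B(ℋ)`. -/
def ptraceAux (A : Op (AuxSites κ κ')) : Op κ := fun a b =>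
  ∑ c : Cfg κ', A (fun x => (a x, c x)) (fun x => (b x, c x))

/-- A product vector `⊗_x π_x`. -/
def IsProductVec (ψ : Cfg κ → ℂ) : Prop :=
  ∃ p : ∀ x : Γ, κ x → ℂ, ∀ a, ψ a = ∏ x : Γ, p x (a x)

end aux

/-- `U` solves the Schrödinger-type integral equation
`U(s) = 1 + i ∫₀ˢ H(u) U(u) du` on `[0,1]` (entrywise). -/
def SolvesEvolution {ι : Type} [Fintype ι] [DecidableEq ι]
    (H : ℝ → Matrix ι ι ℂ) (U : ℝ → Matrix ι ι ℂ) : Prop :=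
  ∀ s ∈ Set.Icc (0 : ℝ) 1, ∀ a b,
    U s a b = (1 : Matrix ι ι ℂ) a b + Complex.I * ∫ u in (0 : ℝ)..s, (H u * U u) a b

/-- The truncated interaction `q̂` associated to the cut `Z | Z^c`. -/
def qhat {ι : Type} (Z : Finset Γ) (q : ℝ → Finset Γ → Matrix ι ι ℂ) :
    ℝ → Finset Γ → Matrix ι ι ℂ := fun s X => if X ⊆ Z ∨ X ⊆ Zᶜ then q s X else 0

section inv

variable (κ κ' : Γ → Type)
variable [∀ x, Fintype (κ x)] [∀ x, DecidableEq (κ x)]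
variable [∀ x, Fintype (κ' x)] [∀ x, DecidableEq (κ' x)]

/-- Assumption (Inv): the data `(q, U, Ω')` witnesses invertibility of the state `Ω = ω`:
`q(s)` is a measurable family of interactions on `𝓗̃` with `sup_s ‖q(s)‖_{m_I} ≤ C_I`,
`U` solves the corresponding evolution equation, and `Ω ⊗ Ω' = U(1) Π` with `Π` a product
unit vector. -/
def InvData (G : SimpleGraph Γ) (mI : ℕ → ℝ) (CI : ℝ)
    (q : ℝ → Finset Γ → Op (AuxSites κ κ')) (U : ℝ → Op (AuxSites κ κ'))
    (ω : Cfg κ → ℂ) (ω' : Cfg κ' → ℂ) : Prop :=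
  (∀ s ∈ Set.Icc (0 : ℝ) 1, IsInteraction (AuxSites κ κ') (q s)) ∧
    (∀ (X : Finset Γ) a b, Measurable fun s => q s X a b) ∧
    (∀ s ∈ Set.Icc (0 : ℝ) 1, intNormLE (AuxSites κ κ') G mI (q s) CI) ∧
    SolvesEvolution (fun s => ∑ X : Finset Γ, q s X) U ∧
    UnitVec ω' ∧
    ∃ Pv : Cfg (AuxSites κ κ') → ℂ, IsProductVec (AuxSites κ κ') Pv ∧ UnitVec Pv ∧
      tensorVec κ κ' ω ω' = (U 1).mulVec Pv

/-- The stitching map `Σ_Z` built from the unitary `V = V_Z`: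
`Σ_Z(ρ) = tr_{ℋ'}[V^*(tr_{Z^c}(V(μ⊗μ')V^*) ⊗ tr_Z(V(ρ⊗μ')V^*))V]`. -/
def stitchMap (Z : Finset Γ) (V : Op (AuxSites κ κ')) (μ : Op κ) (μ' : Op κ')
    (ρ : Op κ) : Op κ :=
  ptraceAux κ κ' (Vᴴ *
    cutTensor (AuxSites κ κ') Z
      (ptrace (AuxSites κ κ') Z (V * tensorOp κ κ' μ μ' * Vᴴ))
      (ptrace (AuxSites κ κ') Zᶜ (V * tensorOp κ κ' ρ μ' * Vᴴ)) * V)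

end inv

/-- An F-function on the graph `Γ` with constants `CF`, `CF'`. -/
def IsFFunction (G : SimpleGraph Γ) (F : ℕ → ℝ) (CF CF' : ℝ) : Prop :=
  (∀ x y : Γ, ∑ z : Γ, F (G.dist x z) * F (G.dist z y) ≤ CF * F (G.dist x y)) ∧
    ∀ x : Γ, ∑ y : Γ, F (G.dist x y) ≤ CF'

/-- The logarithmic-superadditive envelope `S(f)` of `f`: the supremum of `∏ f(r_i)`
over all compositions `r = r_1 + ⋯ + r_ℓ` with `r_i ∈ ℕ+`. -/
def Senv (f : ℕ → ℝ) (r : ℕ) : ℝ :=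
  sSup {t : ℝ | ∃ L : List ℕ, L ≠ [] ∧ (∀ i ∈ L, 1 ≤ i) ∧ L.sum = r ∧ t = (L.map f).prod}

end Stability

namespace Stability


private lemma rpow_le_exp_aux {s b x : ℝ} (hs : 0 ≤ s) (hb : 0 < b) (hx : 0 ≤ x) :
    x ^ s ≤ (s / b) ^ s * Real.exp (b * x) := by
  rcases eq_or_lt_of_le hs with h0 | hs
  · rw [← h0, Real.rpow_zero, Real.rpow_zero, one_mul]
    exact Real.one_le_exp (by positivity)
  · set y := b * x / s with hy_def
    have hy : 0 ≤ y := by positivity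
    have h1 : y ≤ Real.exp y := le_trans (by linarith) (Real.add_one_le_exp y)
    have hxe : x = s / b * y := by rw [hy_def]; field_simp
    calc x ^ s = (s / b * y) ^ s := by rw [← hxe]
      _ = (s / b) ^ s * y ^ s := Real.mul_rpow (by positivity) hy
      _ ≤ (s / b) ^ s * (Real.exp y) ^ s :=
          mul_le_mul_of_nonneg_left (Real.rpow_le_rpow hy h1 hs.le)
            (Real.rpow_nonneg (by positivity) _)
      _ = (s / b) ^ s * Real.exp (b * x) := by
          rw [← Real.exp_mul]
          congr 1
          rw [hy_def, div_mul_cancel₀ _ hs.ne']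

private lemma poly_le_exp (d : ℕ) {C' c α : ℝ} (hC' : 0 ≤ C') (hc : 0 < c) (hα : 0 < α) :
    ∃ K : ℝ, 0 < K ∧ ∀ j : ℕ, 1 ≤ j →
      1 + C' * (j : ℝ) ^ d ≤ K * Real.exp (c * (j : ℝ) ^ α) := by
  have hKpos : (0:ℝ) < 1 + C' * ((d : ℝ) / α / c) ^ ((d : ℝ) / α) := by
    have : 0 ≤ C' * ((d : ℝ) / α / c) ^ ((d : ℝ) / α) :=
      mul_nonneg hC' (Real.rpow_nonneg (by positivity) _)
    linarith
  refine ⟨1 + C' * ((d : ℝ) / α / c) ^ ((d : ℝ) / α), hKpos, fun j hj => ?_⟩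
  have hj0 : (0 : ℝ) ≤ j := Nat.cast_nonneg j
  have hjα : (0 : ℝ) ≤ (j : ℝ) ^ α := Real.rpow_nonneg hj0 _
  have h1 : ((j : ℝ) ^ (d : ℕ) : ℝ) = ((j : ℝ) ^ α) ^ ((d : ℝ) / α) := by
    rw [← Real.rpow_natCast (j : ℝ) d, ← Real.rpow_mul hj0]
    congr 1
    field_simp
  have h2 : ((j : ℝ) ^ α) ^ ((d : ℝ) / α) ≤ ((d : ℝ) / α / c) ^ ((d : ℝ) / α) *
      Real.exp (c * (j : ℝ) ^ α) := rpow_le_exp_aux (by positivity) hc hjα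
  have h3 : (1 : ℝ) ≤ Real.exp (c * (j : ℝ) ^ α) := Real.one_le_exp (by positivity)
  have h4 : C' * (j : ℝ) ^ d ≤ C' * (((d : ℝ) / α / c) ^ ((d : ℝ) / α) *
      Real.exp (c * (j : ℝ) ^ α)) := by
    rw [h1]; exact mul_le_mul_of_nonneg_left h2 hC'
  nlinarith [h3, h4]

private def gAux (C' : ℝ) (d : ℕ) (m₂ : ℕ → ℝ) (j : ℕ) : ℝ := (1 + C' * (j : ℝ) ^ d) * m₂ j

private noncomputable def hAux (C' : ℝ) (d : ℕ) (m₂ : ℕ → ℝ) (k : ℕ) : ℝ :=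
  sSup (Set.range fun j : ℕ => gAux C' d m₂ (k + j))

private noncomputable def mAux (C' : ℝ) (d : ℕ) (m₁ m₂ : ℕ → ℝ) (r : ℕ) : ℝ :=
  if r ≤ 1 then 2 + (2 * m₁ 1 + 2 * hAux C' d m₂ 1)
  else 2 * m₁ (r / 2) + 2 * hAux C' d m₂ (r / 2)

section mlem

variable {C' : ℝ} {d : ℕ} {m₁ m₂ : ℕ → ℝ}

private lemma gAux_nonneg (hC' : 0 ≤ C') (hm₂ : InM m₂) (j : ℕ) : 0 ≤ gAux C' d m₂ j :=
  mul_nonneg (by positivity) (hm₂.1 j)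

private lemma gAux_decay (hC' : 0 ≤ C') (hm₂ : InM m₂) {α : ℝ} (hα : 0 < α) (hα1 : α < 1) :
    ∃ C c : ℝ, 0 < C ∧ 0 < c ∧ ∀ j : ℕ, 1 ≤ j →
      gAux C' d m₂ j ≤ C * Real.exp (-(c * (j : ℝ) ^ α)) := by
  obtain ⟨C₂, c₂, hC₂, hc₂, hb⟩ := hm₂.2.2 α hα hα1
  obtain ⟨K, hK, hKb⟩ := poly_le_exp d hC' (half_pos hc₂) hα
  refine ⟨K * C₂, c₂ / 2, mul_pos hK hC₂, half_pos hc₂, fun j hj => ?_⟩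
  have h1 : gAux C' d m₂ j ≤ (K * Real.exp (c₂ / 2 * (j : ℝ) ^ α)) *
      (C₂ * Real.exp (-(c₂ * (j : ℝ) ^ α))) := by
    refine mul_le_mul (hKb j hj) (hb j hj) (hm₂.1 j) (by positivity)
  refine h1.trans (le_of_eq ?_)
  rw [mul_mul_mul_comm, ← Real.exp_add]
  congr 1
  ring

private lemma gAux_bdd (hC' : 0 ≤ C') (hm₂ : InM m₂) (k : ℕ) :
    BddAbove (Set.range fun j : ℕ => gAux C' d m₂ (k + j)) := by
  obtain ⟨C, c, hC, hc, hb⟩ := gAux_decay (d := d) hC' hm₂ (α := 1/2) (by norm_num) (by norm_num)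
  refine ⟨max (gAux C' d m₂ 0) C, ?_⟩
  rintro t ⟨j, rfl⟩
  show gAux C' d m₂ (k + j) ≤ _
  rcases Nat.eq_zero_or_pos (k + j) with h | h
  · rw [h]; exact le_max_left _ _
  · refine le_trans (le_trans (hb _ h) ?_) (le_max_right _ _)
    have h1 : Real.exp (-(c * ((k + j : ℕ) : ℝ) ^ (1/2 : ℝ))) ≤ 1 :=
      Real.exp_le_one_iff.mpr (neg_nonpos.mpr (by positivity))
    exact mul_le_of_le_one_right hC.le h1

private lemma gAux_le_hAux (hC' : 0 ≤ C') (hm₂ : InM m₂) (k : ℕ) :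
    gAux C' d m₂ k ≤ hAux C' d m₂ k :=
  le_csSup (gAux_bdd hC' hm₂ k) ⟨0, by simp⟩

private lemma hAux_nonneg (hC' : 0 ≤ C') (hm₂ : InM m₂) (k : ℕ) : 0 ≤ hAux C' d m₂ k :=
  le_trans (gAux_nonneg hC' hm₂ k) (gAux_le_hAux hC' hm₂ k)

private lemma hAux_anti (hC' : 0 ≤ C') (hm₂ : InM m₂) {k k' : ℕ} (h : k ≤ k') :
    hAux C' d m₂ k' ≤ hAux C' d m₂ k := by
  refine csSup_le_csSup (gAux_bdd hC' hm₂ k) ⟨_, ⟨0, rfl⟩⟩ ?_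
  rintro t ⟨j, rfl⟩
  refine ⟨k' - k + j, ?_⟩
  show gAux C' d m₂ (k + (k' - k + j)) = gAux C' d m₂ (k' + j)
  exact congrArg _ (by omega)

private lemma hAux_decay (hC' : 0 ≤ C') (hm₂ : InM m₂) {α : ℝ} (hα : 0 < α) (hα1 : α < 1) :
    ∃ C c : ℝ, 0 < C ∧ 0 < c ∧ ∀ k : ℕ, 1 ≤ k →
      hAux C' d m₂ k ≤ C * Real.exp (-(c * (k : ℝ) ^ α)) := by
  obtain ⟨C, c, hC, hc, hb⟩ := gAux_decay (d := d) hC' hm₂ hα hα1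
  refine ⟨C, c, hC, hc, fun k hk => ?_⟩
  refine csSup_le ⟨_, ⟨0, rfl⟩⟩ ?_
  rintro t ⟨j, rfl⟩
  refine (hb _ (by omega)).trans ?_
  have hle : ((k : ℝ) : ℝ) ^ α ≤ ((k + j : ℕ) : ℝ) ^ α := by
    apply Real.rpow_le_rpow (Nat.cast_nonneg _) (by push_cast; linarith) hα.le
  have : -(c * ((k + j : ℕ) : ℝ) ^ α) ≤ -(c * (k : ℝ) ^ α) := by nlinarith
  exact mul_le_mul_of_nonneg_left (Real.exp_le_exp.mpr this) hC.le

lemma mAux_InM (hC' : 0 ≤ C') (hm₁ : InM m₁) (hm₂ : InM m₂) : InM (mAux C' d m₁ m₂) := by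
  refine ⟨fun r => ?_, fun r s hrs => ?_, fun α hα hα1 => ?_⟩
  · unfold mAux
    have h1 := hm₁.1 1
    have h2 := hm₁.1 (r / 2)
    have h3 := hAux_nonneg (d := d) hC' hm₂ 1
    have h4 := hAux_nonneg (d := d) hC' hm₂ (r / 2)
    split <;> linarith
  · unfold mAux
    by_cases hs : s ≤ 1
    · rw [if_pos (le_trans hrs hs), if_pos hs]
    · rw [if_neg hs]
      have hs2 : 1 ≤ s / 2 := by omega
      by_cases hr : r ≤ 1
      · rw [if_pos hr]
        have h1 := hm₁.2.1 1 (s / 2) hs2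
        have h2 := hAux_anti (d := d) hC' hm₂ hs2
        linarith
      · rw [if_neg hr]
        have hdd : r / 2 ≤ s / 2 := Nat.div_le_div_right hrs
        have h1 := hm₁.2.1 _ _ hdd
        have h2 := hAux_anti (d := d) hC' hm₂ hdd
        linarith
  · obtain ⟨C₁, c₁, hC₁, hc₁, hb₁⟩ := hm₁.2.2 α hα hα1
    obtain ⟨C₂, c₂, hC₂, hc₂, hb₂⟩ := hAux_decay (d := d) hC' hm₂ hα hα1
    set c' := min c₁ c₂ with hc'def
    have hc' : 0 < c' := lt_min hc₁ hc₂
    set c := c' / 4 with hcdef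
    have hc : 0 < c := by positivity
    set B := 2 + (2 * m₁ 1 + 2 * hAux C' d m₂ 1) with hBdef
    have hB : 0 ≤ B := by
      have h1 := hm₁.1 1
      have h3 := hAux_nonneg (d := d) hC' hm₂ 1
      rw [hBdef]; linarith
    refine ⟨max (2 * C₁ + 2 * C₂) (B * Real.exp c), c,
      lt_max_iff.mpr (Or.inl (by linarith)), hc, fun r hr => ?_⟩
    by_cases hr1 : r ≤ 1
    · have hreq : r = 1 := le_antisymm hr1 hr
      subst hreq
      rw [mAux, if_pos le_rfl]
      have : ((1 : ℕ) : ℝ) ^ α = 1 := by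
        rw [Nat.cast_one, Real.one_rpow]
      rw [this, mul_one]
      calc B = B * Real.exp c * Real.exp (-c) := by
            rw [mul_assoc, ← Real.exp_add]; simp
        _ ≤ max (2 * C₁ + 2 * C₂) (B * Real.exp c) * Real.exp (-c) :=
            mul_le_mul_of_nonneg_right (le_max_right _ _) (Real.exp_pos _).le
    · rw [mAux, if_neg hr1]
      have hk1 : 1 ≤ r / 2 := by omega
      have hkr : (r : ℝ) / 4 ≤ ((r / 2 : ℕ) : ℝ) := by
        have : r ≤ 4 * (r / 2) := by omega
        have h4 : (r : ℝ) ≤ 4 * ((r / 2 : ℕ) : ℝ) := by exact_mod_cast this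
        linarith
      have hkα : (r : ℝ) ^ α / 4 ≤ ((r / 2 : ℕ) : ℝ) ^ α := by
        have h1 : ((r : ℝ) / 4) ^ α ≤ ((r / 2 : ℕ) : ℝ) ^ α :=
          Real.rpow_le_rpow (by positivity) hkr hα.le
        have h2 : ((r : ℝ) / 4) ^ α = (r : ℝ) ^ α / (4 : ℝ) ^ α :=
          Real.div_rpow (Nat.cast_nonneg r) (by norm_num : (0:ℝ) ≤ 4) α
        have h3 : (4 : ℝ) ^ α ≤ 4 := by
          calc (4 : ℝ) ^ α ≤ (4 : ℝ) ^ (1 : ℝ) :=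
                Real.rpow_le_rpow_of_exponent_le (by norm_num) hα1.le
            _ = 4 := Real.rpow_one 4
        have h40 : (0 : ℝ) < (4 : ℝ) ^ α := Real.rpow_pos_of_pos (by norm_num) α
        have h5 : (r : ℝ) ^ α / 4 ≤ (r : ℝ) ^ α / (4 : ℝ) ^ α := by
          apply div_le_div_of_nonneg_left (Real.rpow_nonneg (Nat.cast_nonneg r) α) h40 h3
        rw [h2] at h1
        linarith
      have hexp : ∀ cc : ℝ, c' ≤ cc →
          Real.exp (-(cc * ((r / 2 : ℕ) : ℝ) ^ α)) ≤ Real.exp (-(c * (r : ℝ) ^ α)) := by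
        intro cc hcc
        apply Real.exp_le_exp.mpr
        have h0 : 0 ≤ ((r / 2 : ℕ) : ℝ) ^ α := Real.rpow_nonneg (Nat.cast_nonneg _) α
        have : c * (r : ℝ) ^ α ≤ cc * ((r / 2 : ℕ) : ℝ) ^ α := by
          calc c * (r : ℝ) ^ α = c' * ((r : ℝ) ^ α / 4) := by rw [hcdef]; ring
            _ ≤ c' * ((r / 2 : ℕ) : ℝ) ^ α := mul_le_mul_of_nonneg_left hkα hc'.le
            _ ≤ cc * ((r / 2 : ℕ) : ℝ) ^ α := mul_le_mul_of_nonneg_right hcc h0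
        linarith
      calc 2 * m₁ (r / 2) + 2 * hAux C' d m₂ (r / 2)
          ≤ 2 * (C₁ * Real.exp (-(c₁ * ((r / 2 : ℕ) : ℝ) ^ α))) +
            2 * (C₂ * Real.exp (-(c₂ * ((r / 2 : ℕ) : ℝ) ^ α))) := by
            have := hb₁ (r / 2) hk1
            have := hb₂ (r / 2) hk1
            linarith
        _ ≤ 2 * (C₁ * Real.exp (-(c * (r : ℝ) ^ α))) +
            2 * (C₂ * Real.exp (-(c * (r : ℝ) ^ α))) := by
            have e1 := hexp c₁ (min_le_left _ _)
            have e2 := hexp c₂ (min_le_right _ _)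
            have := mul_le_mul_of_nonneg_left e1 hC₁.le
            have := mul_le_mul_of_nonneg_left e2 hC₂.le
            linarith
        _ = (2 * C₁ + 2 * C₂) * Real.exp (-(c * (r : ℝ) ^ α)) := by ring
        _ ≤ max (2 * C₁ + 2 * C₂) (B * Real.exp c) * Real.exp (-(c * (r : ℝ) ^ α)) :=
            mul_le_mul_of_nonneg_right (le_max_left _ _) (Real.exp_pos _).le

end mlem

section OpAux

variable {Γ : Type} [Fintype Γ] [DecidableEq Γ]
variable (κ : Γ → Type) [∀ x, Fintype (κ x)] [∀ x, DecidableEq (κ x)]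

private lemma opNorm_nonneg' (A : Op κ) : 0 ≤ opNorm A := norm_nonneg _

private lemma opNorm_add_le' (A B : Op κ) : opNorm (A + B) ≤ opNorm A + opNorm B := by
  unfold opNorm; rw [map_add]; exact norm_add_le _ _

private lemma opNorm_sub_le' (A B : Op κ) : opNorm (A - B) ≤ opNorm A + opNorm B := by
  unfold opNorm; rw [map_sub]; exact norm_sub_le _ _

private lemma opNorm_sub_comm' (A B : Op κ) : opNorm (A - B) = opNorm (B - A) := by
  unfold opNorm; rw [map_sub, map_sub]; exact norm_sub_rev _ _

private lemma eq_of_opNorm_sub_nonpos {A B : Op κ} (h : opNorm (A - B) ≤ 0) : A = B := by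
  have h0 : Matrix.toEuclideanCLM (𝕜 := ℂ) (A - B) = 0 :=
    norm_eq_zero.mp (le_antisymm h (norm_nonneg _))
  have h1 : A - B = 0 := by
    have h2 := congrArg (Matrix.toEuclideanCLM (𝕜 := ℂ)).symm h0
    simpa using h2
  exact sub_eq_zero.mp h1

private lemma glue_lam₁ (Y : Finset Γ) (a : SubCfg κ Y) (c : SubCfg κ Yᶜ) :
    (fun x : {y // y ∈ Y} => glue κ Y a c x.1) = a := by
  funext x
  rcases x with ⟨v, hv⟩
  simp [glue, hv]

private lemma glue_lam₂ (Y : Finset Γ) (a : SubCfg κ Y) (c : SubCfg κ Yᶜ) :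
    (fun x : {y // y ∈ Yᶜ} => glue κ Y a c x.1) = c := by
  funext x
  rcases x with ⟨v, hv⟩
  have hv' : v ∉ Y := Finset.mem_compl.mp hv
  simp [glue, hv']

private lemma glue_lam₃ (Y : Finset Γ) (z : Cfg κ) :
    glue κ Y (fun x => z x.1) (fun x => z x.1) = z := by
  funext v
  by_cases h : v ∈ Y <;> simp [glue, h]

/-- The bijection between configurations on `Y` times configurations on `Yᶜ` and
global configurations. -/
private def cfgEquiv (Y : Finset Γ) : (SubCfg κ Y × SubCfg κ Yᶜ) ≃ Cfg κ where
  toFun p := glue κ Y p.1 p.2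
  invFun z := (fun x => z x.1, fun x => z x.1)
  left_inv p := by
    obtain ⟨a, c⟩ := p
    exact Prod.ext (glue_lam₁ κ Y a c) (glue_lam₂ κ Y a c)
  right_inv z := glue_lam₃ κ Y z

private lemma sum_cfg (Y : Finset Γ) {M : Type} [AddCommMonoid M] (f : Cfg κ → M) :
    ∑ z : Cfg κ, f z = ∑ a : SubCfg κ Y, ∑ c : SubCfg κ Yᶜ, f (glue κ Y a c) := by
  rw [← (cfgEquiv κ Y).sum_comp f]
  exact Fintype.sum_prod_type _

private lemma outside_iff (Y : Finset Γ) (a b : Cfg κ) :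
    (∀ x, x ∉ Y → a x = b x) ↔
      (fun x : {y // y ∈ Yᶜ} => a x.1) = (fun x : {y // y ∈ Yᶜ} => b x.1) := by
  constructor
  · intro h
    funext x
    exact h x.1 (Finset.mem_compl.mp x.2)
  · intro h x hx
    exact congrFun h ⟨x, Finset.mem_compl.mpr hx⟩

private def liftv (Y : Finset Γ) (c : SubCfg κ Yᶜ) (u : SubCfg κ Y → ℂ) : Cfg κ → ℂ :=
  fun z => if (fun x : {y // y ∈ Yᶜ} => z x.1) = c then u (fun x => z x.1) else 0

private lemma liftv_glue (Y : Finset Γ) (c : SubCfg κ Yᶜ) (u : SubCfg κ Y → ℂ)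
    (a : SubCfg κ Y) (e : SubCfg κ Yᶜ) :
    liftv κ Y c u (glue κ Y a e) = if e = c then u a else 0 := by
  simp only [liftv, glue_lam₁, glue_lam₂]

private def evec {ι : Type} [Fintype ι] (v : ι → ℂ) : EuclideanSpace ℂ ι :=
  (WithLp.equiv 2 (ι → ℂ)).symm v

private lemma toE_evec {ι : Type} [Fintype ι] [DecidableEq ι] (A : Matrix ι ι ℂ) (v : ι → ℂ) :
    Matrix.toEuclideanCLM (𝕜 := ℂ) A (evec v) = evec (A.mulVec v) := by
  simp only [evec]
  rfl

private lemma norm_evec {ι : Type} [Fintype ι] (v : ι → ℂ) :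
    ‖evec v‖ = Real.sqrt (∑ i, ‖v i‖ ^ 2) := by
  rw [EuclideanSpace.norm_eq]
  rfl

private lemma inner_evec {ι : Type} [Fintype ι] (u w : ι → ℂ) :
    (inner ℂ (evec u) (evec w) : ℂ) = ∑ i, (starRingEnd ℂ) (u i) * w i := by
  simp [evec, PiLp.inner_apply, RCLike.inner_apply, WithLp.equiv_symm_apply, mul_comm]

private lemma sum_comm₃ {α β γ M : Type} [Fintype α] [Fintype β] [Fintype γ]
    [AddCommMonoid M] (f : α → β → γ → M) :
    ∑ a : α, ∑ b : β, ∑ c : γ, f a b c = ∑ c : γ, ∑ a : α, ∑ b : β, f a b c :=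
  (Finset.sum_congr rfl fun _ _ => Finset.sum_comm).trans Finset.sum_comm

private lemma bilin_bound (Y : Finset Γ) (A : Op κ) (u w : SubCfg κ Y → ℂ) :
    ‖∑ a, ∑ b, (starRingEnd ℂ) (u a) * ptrace κ Y A a b * w b‖ ≤
      (Fintype.card (SubCfg κ Yᶜ) : ℝ) * opNorm A *
        (Real.sqrt (∑ a, ‖u a‖ ^ 2) * Real.sqrt (∑ b, ‖w b‖ ^ 2)) := by
  have hsplit : (∑ a, ∑ b, (starRingEnd ℂ) (u a) * ptrace κ Y A a b * w b)
      = ∑ c : SubCfg κ Yᶜ, ∑ a, ∑ b,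
          (starRingEnd ℂ) (u a) * A (glue κ Y a c) (glue κ Y b c) * w b := by
    simp only [ptrace, Finset.mul_sum, Finset.sum_mul]
    exact sum_comm₃ _
  have hterm : ∀ c : SubCfg κ Yᶜ,
      (∑ a, ∑ b, (starRingEnd ℂ) (u a) * A (glue κ Y a c) (glue κ Y b c) * w b)
        = (inner ℂ (evec (liftv κ Y c u))
            (Matrix.toEuclideanCLM (𝕜 := ℂ) A (evec (liftv κ Y c w))) : ℂ) := by
    intro c
    rw [toE_evec, inner_evec]
    have hmv : ∀ z : Cfg κ, (A.mulVec (liftv κ Y c w)) z = ∑ b, A z (glue κ Y b c) * w b := by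
      intro z
      show ∑ z', A z z' * liftv κ Y c w z' = _
      rw [sum_cfg κ Y (f := fun z' => A z z' * liftv κ Y c w z')]
      simp only [liftv_glue, mul_ite, mul_zero, Finset.sum_ite_irrel, Finset.sum_const_zero,
        Finset.sum_ite_eq', Finset.mem_univ, if_true]
    simp only [hmv, liftv_glue]
    rw [sum_cfg κ Y (f := fun z =>
      (starRingEnd ℂ) (liftv κ Y c u z) * ∑ b, A z (glue κ Y b c) * w b)]
    simp only [liftv_glue, apply_ite (starRingEnd ℂ), map_zero, ite_mul, zero_mul,
      Finset.mul_sum, Finset.sum_ite_irrel, Finset.sum_const_zero,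
      Finset.sum_ite_eq', Finset.mem_univ, if_true]
    exact Finset.sum_congr rfl fun a _ => Finset.sum_congr rfl fun b _ => by ring
  have hnorm : ∀ (u' : SubCfg κ Y → ℂ) (c : SubCfg κ Yᶜ),
      ‖evec (liftv κ Y c u')‖ = Real.sqrt (∑ a, ‖u' a‖ ^ 2) := by
    intro u' c
    rw [norm_evec]
    congr 1
    rw [sum_cfg κ Y (f := fun z => ‖liftv κ Y c u' z‖ ^ 2)]
    simp only [liftv_glue, apply_ite (fun t : ℂ => ‖t‖ ^ 2), norm_zero,
      Finset.sum_ite_irrel, Finset.sum_const_zero, Finset.sum_ite_eq',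
      Finset.mem_univ, if_true]
    simp
  have hb : ∀ c : SubCfg κ Yᶜ,
      ‖∑ a, ∑ b, (starRingEnd ℂ) (u a) * A (glue κ Y a c) (glue κ Y b c) * w b‖ ≤
        opNorm A * (Real.sqrt (∑ a, ‖u a‖ ^ 2) * Real.sqrt (∑ b, ‖w b‖ ^ 2)) := by
    intro c
    rw [hterm c]
    refine (norm_inner_le_norm _ _).trans ?_
    have h2 := (Matrix.toEuclideanCLM (𝕜 := ℂ) A).le_opNorm (evec (liftv κ Y c w))
    calc ‖evec (liftv κ Y c u)‖ * ‖Matrix.toEuclideanCLM (𝕜 := ℂ) A (evec (liftv κ Y c w))‖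
        ≤ ‖evec (liftv κ Y c u)‖ *
            (‖Matrix.toEuclideanCLM (𝕜 := ℂ) A‖ * ‖evec (liftv κ Y c w)‖) :=
          mul_le_mul_of_nonneg_left h2 (norm_nonneg _)
      _ = opNorm A * (Real.sqrt (∑ a, ‖u a‖ ^ 2) * Real.sqrt (∑ b, ‖w b‖ ^ 2)) := by
          rw [hnorm u c, hnorm w c]
          unfold opNorm
          ring
  rw [hsplit]
  refine (norm_sum_le _ _).trans ?_
  refine (Finset.sum_le_sum fun c _ => hb c).trans (le_of_eq ?_)
  rw [Finset.sum_const, Finset.card_univ, nsmul_eq_mul]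
  ring

private lemma ptrace_div_mulVec_bound (Y : Finset Γ) (A : Op κ)
    (hne : Nonempty (SubCfg κ Yᶜ)) (w : SubCfg κ Y → ℂ) :
    ∑ a, ‖(Matrix.of fun a b =>
        ptrace κ Y A a b / (Fintype.card (SubCfg κ Yᶜ) : ℂ)).mulVec w a‖ ^ 2
      ≤ opNorm A ^ 2 * ∑ b, ‖w b‖ ^ 2 := by
  set u := (Matrix.of fun a b =>
    ptrace κ Y A a b / (Fintype.card (SubCfg κ Yᶜ) : ℂ)).mulVec w with hu
  have hD : (0 : ℝ) < (Fintype.card (SubCfg κ Yᶜ) : ℝ) := by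
    exact_mod_cast Fintype.card_pos
  have hid : (∑ a, (starRingEnd ℂ) (u a) * u a) = ((∑ a, ‖u a‖ ^ 2 : ℝ) : ℂ) := by
    push_cast
    refine Finset.sum_congr rfl fun a _ => ?_
    rw [RCLike.conj_mul]
    norm_cast
  have hexp : (∑ a, (starRingEnd ℂ) (u a) * u a)
      = (∑ a, ∑ b, (starRingEnd ℂ) (u a) * ptrace κ Y A a b * w b) /
          (Fintype.card (SubCfg κ Yᶜ) : ℂ) := by
    rw [Finset.sum_div]
    refine Finset.sum_congr rfl fun a _ => ?_
    have hua : u a = ∑ b, ptrace κ Y A a b / (Fintype.card (SubCfg κ Yᶜ) : ℂ) * w b := rfl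
    nth_rewrite 2 [hua]
    rw [Finset.mul_sum, Finset.sum_div]
    exact Finset.sum_congr rfl fun b _ => by ring
  have hkey : (∑ a, ‖u a‖ ^ 2) ≤
      opNorm A * (Real.sqrt (∑ a, ‖u a‖ ^ 2) * Real.sqrt (∑ b, ‖w b‖ ^ 2)) := by
    have h2 : (∑ a, ‖u a‖ ^ 2) = ‖((∑ a, ‖u a‖ ^ 2 : ℝ) : ℂ)‖ := by
      rw [Complex.norm_real, Real.norm_of_nonneg (by positivity)]
    have h3 : ‖((Fintype.card (SubCfg κ Yᶜ) : ℕ) : ℂ)‖ = (Fintype.card (SubCfg κ Yᶜ) : ℝ) := by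
      rw [Complex.norm_natCast]
    conv_lhs => rw [h2, ← hid, hexp, norm_div, h3]
    rw [div_le_iff₀ hD]
    calc ‖∑ a, ∑ b, (starRingEnd ℂ) (u a) * ptrace κ Y A a b * w b‖
        ≤ (Fintype.card (SubCfg κ Yᶜ) : ℝ) * opNorm A *
            (Real.sqrt (∑ a, ‖u a‖ ^ 2) * Real.sqrt (∑ b, ‖w b‖ ^ 2)) :=
          bilin_bound κ Y A u w
      _ = opNorm A * (Real.sqrt (∑ a, ‖u a‖ ^ 2) * Real.sqrt (∑ b, ‖w b‖ ^ 2)) *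
            (Fintype.card (SubCfg κ Yᶜ) : ℝ) := by ring
  have hsu : (0:ℝ) ≤ ∑ a, ‖u a‖ ^ 2 := by positivity
  have hsw : (0:ℝ) ≤ ∑ b, ‖w b‖ ^ 2 := by positivity
  nlinarith [hkey, Real.sq_sqrt hsu, Real.sq_sqrt hsw, Real.sqrt_nonneg (∑ a, ‖u a‖ ^ 2),
    Real.sqrt_nonneg (∑ b, ‖w b‖ ^ 2), opNorm_nonneg' κ A,
    sq_nonneg (Real.sqrt (∑ a, ‖u a‖ ^ 2) - opNorm A * Real.sqrt (∑ b, ‖w b‖ ^ 2))]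

private lemma condExp_mulVec (Y : Finset Γ) (A : Op κ) (v : Cfg κ → ℂ) (z : Cfg κ) :
    (condExp κ Y A).mulVec v z =
      (Matrix.of fun a b => ptrace κ Y A a b / (Fintype.card (SubCfg κ Yᶜ) : ℂ)).mulVec
        (fun b : SubCfg κ Y => v (glue κ Y b (fun x : {y // y ∈ Yᶜ} => z x.1))) (fun x : {y // y ∈ Y} => z x.1) := by
  show ∑ b, condExp κ Y A z b * v b = _
  rw [sum_cfg κ Y (f := fun b => condExp κ Y A z b * v b)]
  have hc : ∀ (b' : SubCfg κ Y) (e : SubCfg κ Yᶜ),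
      condExp κ Y A z (glue κ Y b' e) * v (glue κ Y b' e) =
        if e = (fun x : {y // y ∈ Yᶜ} => z x.1) then
          ptrace κ Y A (fun x : {y // y ∈ Y} => z x.1) b' / (Fintype.card (SubCfg κ Yᶜ) : ℂ) *
            v (glue κ Y b' e)
        else 0 := by
    intro b' e
    by_cases h : e = (fun x : {y // y ∈ Yᶜ} => z x.1)
    · rw [if_pos h]
      have hcond : ∀ x, x ∉ Y → z x = glue κ Y b' e x := by
        refine (outside_iff κ Y z (glue κ Y b' e)).mpr ?_
        rw [glue_lam₂]
        exact h.symm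
      show (if ∀ x, x ∉ Y → z x = glue κ Y b' e x then
          ptrace κ Y A (fun x : {y // y ∈ Y} => z x.1) (fun x => glue κ Y b' e x.1) /
            (Fintype.card (SubCfg κ Yᶜ) : ℂ) else 0) * v (glue κ Y b' e) = _
      rw [if_pos hcond, glue_lam₁]
    · rw [if_neg h]
      have hcond : ¬ ∀ x, x ∉ Y → z x = glue κ Y b' e x := by
        intro hcc
        exact h ((((outside_iff κ Y z (glue κ Y b' e)).mp hcc).trans
          (glue_lam₂ κ Y b' e)).symm)
      show (if ∀ x, x ∉ Y → z x = glue κ Y b' e x then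
          ptrace κ Y A (fun x : {y // y ∈ Y} => z x.1) (fun x => glue κ Y b' e x.1) /
            (Fintype.card (SubCfg κ Yᶜ) : ℂ) else 0) * v (glue κ Y b' e) = 0
      rw [if_neg hcond, zero_mul]
  calc ∑ b' : SubCfg κ Y, ∑ e : SubCfg κ Yᶜ,
        condExp κ Y A z (glue κ Y b' e) * v (glue κ Y b' e)
      = ∑ b' : SubCfg κ Y, ∑ e : SubCfg κ Yᶜ,
          if e = (fun x : {y // y ∈ Yᶜ} => z x.1) then
            ptrace κ Y A (fun x : {y // y ∈ Y} => z x.1) b' / (Fintype.card (SubCfg κ Yᶜ) : ℂ) *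
              v (glue κ Y b' e)
          else 0 :=
        Finset.sum_congr rfl fun b' _ => Finset.sum_congr rfl fun e _ => hc b' e
    _ = ∑ b' : SubCfg κ Y,
          ptrace κ Y A (fun x : {y // y ∈ Y} => z x.1) b' / (Fintype.card (SubCfg κ Yᶜ) : ℂ) *
            v (glue κ Y b' (fun x : {y // y ∈ Yᶜ} => z x.1)) := by
        refine Finset.sum_congr rfl fun b' _ => ?_
        rw [Finset.sum_ite_eq' Finset.univ (fun x : {y // y ∈ Yᶜ} => z x.1)
          (fun e => ptrace κ Y A (fun x : {y // y ∈ Y} => z x.1) b' / (Fintype.card (SubCfg κ Yᶜ) : ℂ) *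
            v (glue κ Y b' e))]
        simp
    _ = _ := rfl

private lemma condExp_opNorm_le (Y : Finset Γ) (A : Op κ) (hcfg : Nonempty (Cfg κ)) :
    opNorm (condExp κ Y A) ≤ opNorm A := by
  haveI := hcfg
  haveI : ∀ x : Γ, Nonempty (κ x) := fun x => ⟨Classical.arbitrary (Cfg κ) x⟩
  haveI hne : Nonempty (SubCfg κ Yᶜ) := ⟨fun x => Classical.arbitrary (κ x.1)⟩
  unfold opNorm
  refine ContinuousLinearMap.opNorm_le_bound _ (norm_nonneg _) fun x => ?_
  set v : Cfg κ → ℂ := WithLp.equiv 2 (Cfg κ → ℂ) x with hv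
  have hx : x = evec v := by
    rw [hv, evec]
    exact (Equiv.symm_apply_apply (WithLp.equiv 2 (Cfg κ → ℂ)) x).symm
  rw [hx, toE_evec, norm_evec, norm_evec]
  have hsq : (∑ z, ‖(condExp κ Y A).mulVec v z‖ ^ 2) ≤ opNorm A ^ 2 * ∑ z, ‖v z‖ ^ 2 := by
    have hL : (∑ z, ‖(condExp κ Y A).mulVec v z‖ ^ 2)
        = ∑ c : SubCfg κ Yᶜ, ∑ a : SubCfg κ Y,
            ‖(Matrix.of fun a b =>
              ptrace κ Y A a b / (Fintype.card (SubCfg κ Yᶜ) : ℂ)).mulVec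
                (fun b => v (glue κ Y b c)) a‖ ^ 2 := by
      rw [sum_cfg κ Y (f := fun z => ‖(condExp κ Y A).mulVec v z‖ ^ 2)]
      rw [Finset.sum_comm]
      refine Finset.sum_congr rfl fun c _ => Finset.sum_congr rfl fun a _ => ?_
      rw [condExp_mulVec κ Y A v (glue κ Y a c), glue_lam₁, glue_lam₂]
    have hR : (∑ z, ‖v z‖ ^ 2)
        = ∑ c : SubCfg κ Yᶜ, ∑ b : SubCfg κ Y, ‖v (glue κ Y b c)‖ ^ 2 := by
      rw [sum_cfg κ Y (f := fun z => ‖v z‖ ^ 2)]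
      exact Finset.sum_comm
    rw [hL, hR, Finset.mul_sum]
    exact Finset.sum_le_sum fun c _ =>
      ptrace_div_mulVec_bound κ Y A hne (fun b => v (glue κ Y b c))
  have h0 : (0:ℝ) ≤ opNorm A := opNorm_nonneg' κ A
  calc Real.sqrt (∑ z, ‖(condExp κ Y A).mulVec v z‖ ^ 2)
      ≤ Real.sqrt (opNorm A ^ 2 * ∑ z, ‖v z‖ ^ 2) := Real.sqrt_le_sqrt hsq
    _ = opNorm A * Real.sqrt (∑ z, ‖v z‖ ^ 2) := by
        rw [Real.sqrt_mul (by positivity), Real.sqrt_sq h0]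

private lemma condExp_sub (Y : Finset Γ) (A B : Op κ) :
    condExp κ Y (A - B) = condExp κ Y A - condExp κ Y B := by
  funext a b
  by_cases h : ∀ x, x ∉ Y → a x = b x
  · simp only [condExp, Matrix.sub_apply, if_pos h, ptrace, Finset.sum_sub_distrib, sub_div]
  · simp only [condExp, Matrix.sub_apply, if_neg h, sub_zero]

private lemma condExp_supportedIn (Y : Finset Γ) (A : Op κ) :
    SupportedIn κ Y (condExp κ Y A) :=
  ⟨Matrix.of fun p q => ptrace κ Y A p q / (Fintype.card (SubCfg κ Yᶜ) : ℂ), rfl⟩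

private lemma condExp_of_supported (Y X : Finset Γ) (hXY : X ⊆ Y) (A : Op κ)
    (hA : SupportedIn κ X A) (hcfg : Nonempty (Cfg κ)) : condExp κ Y A = A := by
  haveI := hcfg
  haveI : ∀ x : Γ, Nonempty (κ x) := fun x => ⟨Classical.arbitrary (Cfg κ) x⟩
  haveI hne : Nonempty (SubCfg κ Yᶜ) := ⟨fun x => Classical.arbitrary (κ x.1)⟩
  have hD : (Fintype.card (SubCfg κ Yᶜ) : ℂ) ≠ 0 := by
    exact_mod_cast Nat.cast_ne_zero.mpr Fintype.card_ne_zero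
  obtain ⟨O, rfl⟩ := hA
  funext a b
  show (if ∀ x, x ∉ Y → a x = b x then
      ptrace κ Y (embed κ X O) (fun x => a x.1) (fun x => b x.1) /
        (Fintype.card (SubCfg κ Yᶜ) : ℂ) else 0) = embed κ X O a b
  by_cases h : ∀ x, x ∉ Y → a x = b x
  · rw [if_pos h]
    have hsummand : ∀ c : SubCfg κ Yᶜ,
        embed κ X O (glue κ Y (fun x => a x.1) c) (glue κ Y (fun x => b x.1) c)
          = embed κ X O a b := by
      intro c
      have hcond : (∀ x, x ∉ X →
          glue κ Y (fun x => a x.1) c x = glue κ Y (fun x => b x.1) c x) ↔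
          (∀ x, x ∉ X → a x = b x) := by
        constructor
        · intro hg x hxX
          by_cases hxY : x ∈ Y
          · have h1 := hg x hxX
            simpa [glue, hxY] using h1
          · exact h x hxY
        · intro hg x hxX
          by_cases hxY : x ∈ Y
          · simp only [glue, dif_pos hxY]
            exact hg x hxX
          · simp [glue, hxY]
      show (if ∀ x, x ∉ X → glue κ Y (fun x => a x.1) c x = glue κ Y (fun x => b x.1) c x
          then O (fun x => glue κ Y (fun x => a x.1) c x.1)
            (fun x => glue κ Y (fun x => b x.1) c x.1) else 0)
        = if ∀ x, x ∉ X → a x = b x then O (fun x => a x.1) (fun x => b x.1) else 0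
      by_cases hc : ∀ x, x ∉ X → a x = b x
      · rw [if_pos (hcond.mpr hc), if_pos hc]
        congr 1 <;> · funext x; simp [glue, hXY x.2]
      · rw [if_neg (fun hg => hc (hcond.mp hg)), if_neg hc]
    have hpt : ptrace κ Y (embed κ X O) (fun x => a x.1) (fun x => b x.1)
        = (Fintype.card (SubCfg κ Yᶜ) : ℂ) * embed κ X O a b := by
      show (∑ c : SubCfg κ Yᶜ, embed κ X O (glue κ Y (fun x => a x.1) c)
          (glue κ Y (fun x => b x.1) c)) = _
      rw [Finset.sum_congr rfl fun c _ => hsummand c]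
      rw [Finset.sum_const, Finset.card_univ, nsmul_eq_mul]
    rw [hpt]
    field_simp
  · rw [if_neg h]
    push_neg at h
    obtain ⟨x, hx, hab⟩ := h
    have hxX : x ∉ X := fun hxX => hx (hXY hxX)
    show (0 : ℂ) = if ∀ x, x ∉ X → a x = b x then O (fun x => a x.1) (fun x => b x.1) else 0
    rw [if_neg (fun hc => hab (hc x hxX))]

private lemma mem_fatten {G : SimpleGraph Γ} {Z : Finset Γ} {r : ℕ} {x : Γ} :
    x ∈ fatten G Z r ↔ ∃ z ∈ Z, G.dist x z ≤ r := by
  simp [fatten]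

private lemma fatten_empty (G : SimpleGraph Γ) (r : ℕ) : fatten G (∅ : Finset Γ) r = ∅ := by
  ext x
  simp [fatten]

private lemma fatten_fatten_subset (G : SimpleGraph Γ) (hconn : G.Connected)
    (X : Finset Γ) (k s : ℕ) : fatten G (fatten G X k) s ⊆ fatten G X (k + s) := by
  intro y hy
  rw [mem_fatten] at hy
  obtain ⟨z, hz, hyz⟩ := hy
  rw [mem_fatten] at hz
  obtain ⟨w, hw, hzw⟩ := hz
  rw [mem_fatten]
  refine ⟨w, hw, ?_⟩
  calc G.dist y w ≤ G.dist y z + G.dist z w := hconn.dist_triangle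
    _ ≤ s + k := add_le_add hyz hzw
    _ = k + s := by omega

private lemma card_fatten_le {G : SimpleGraph Γ} {d : ℕ} {CΓ : ℝ} (hdim : HasDim G d CΓ)
    (X : Finset Γ) (s : ℕ) :
    ((fatten G X s).card : ℝ) ≤ (X.card : ℝ) * (1 + max CΓ 0 * (s : ℝ) ^ d) := by
  have hsub : fatten G X s ⊆ X.biUnion fun z => ball G z s := by
    intro y hy
    rw [mem_fatten] at hy
    obtain ⟨z, hz, hd⟩ := hy
    refine Finset.mem_biUnion.mpr ⟨z, hz, ?_⟩
    simp only [ball, Finset.mem_filter, Finset.mem_univ, true_and]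
    rwa [SimpleGraph.dist_comm]
  have hs0 : (0:ℝ) ≤ (s:ℝ) ^ d := by positivity
  calc ((fatten G X s).card : ℝ) ≤ ((X.biUnion fun z => ball G z s).card : ℝ) := by
        exact_mod_cast Finset.card_le_card hsub
    _ ≤ ∑ z ∈ X, ((ball G z s).card : ℝ) := by exact_mod_cast Finset.card_biUnion_le
    _ ≤ ∑ _z ∈ X, (1 + max CΓ 0 * (s:ℝ) ^ d) := by
        refine Finset.sum_le_sum fun z _ => (hdim z s).trans ?_
        have := le_max_left CΓ 0
        nlinarith
    _ = (X.card : ℝ) * (1 + max CΓ 0 * (s:ℝ) ^ d) := by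
        rw [Finset.sum_const, nsmul_eq_mul]

end OpAux


/-- **Composition preserves almost locality**.  Let `Υ, Υ'` be unital, norm-contracting
linear maps `𝒜 → 𝒜` that preserve almost locality with functions `m₁, m₂ ∈ 𝓜`.  Then
`Υ' ∘ Υ` preserves almost locality with some `m ∈ 𝓜` depending only on
`m₁, m₂, d, C_Γ`. -/
theorem composition_preserves_almost_locality
    (d : ℕ) (CΓ : ℝ) (m₁ m₂ : ℕ → ℝ) (hm₁ : InM m₁) (hm₂ : InM m₂) :
    ∃ m : ℕ → ℝ, InM m ∧
      ∀ (Γ : Type) [Fintype Γ] [DecidableEq Γ] (G : SimpleGraph Γ), G.Connected →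
      HasDim G d CΓ →
      ∀ (κ : Γ → Type) [∀ x, Fintype (κ x)] [∀ x, DecidableEq (κ x)]
        (T T' : Op κ → Op κ),
        IsLinearMap ℂ T → T 1 = 1 → (∀ O : Op κ, opNorm (T O) ≤ opNorm O) →
        IsLinearMap ℂ T' → T' 1 = 1 → (∀ O : Op κ, opNorm (T' O) ≤ opNorm O) →
        PreservesAlmostLocality κ G T m₁ → PreservesAlmostLocality κ G T' m₂ →
        PreservesAlmostLocality κ G (T' ∘ T) m := by

  classical
  refine ⟨mAux (max CΓ 0) d m₁ m₂, mAux_InM (le_max_right CΓ 0) hm₁ hm₂, ?_⟩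
  intro Γ _ _ G hconn hdim κ _ _ T T' hTlin hT1 hTcon hT'lin hT'1 hT'con hTal hT'al
  have hm : InM (mAux (max CΓ 0) d m₁ m₂) := mAux_InM (le_max_right CΓ 0) hm₁ hm₂
  intro X r hr O hO
  simp only [Function.comp_apply]
  by_cases hcfg : Nonempty (Cfg κ)
  case neg =>
    haveI : IsEmpty (Cfg κ) := not_nonempty_iff.mp hcfg
    have hz : (T' (T O) - condExp κ (fatten G X r) (T' (T O))) = 0 := by
      funext a b
      exact (IsEmpty.false a).elim
    rw [hz]
    have h0 : opNorm (0 : Op κ) = 0 := by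
      unfold opNorm
      rw [map_zero, norm_zero]
    rw [h0]
    exact mul_nonneg (mul_nonneg (opNorm_nonneg' κ O) (Nat.cast_nonneg _)) (hm.1 r)
  case pos =>
  by_cases hX : X = ∅
  · subst hX
    have h1 := hTal ∅ 1 le_rfl O hO
    simp only [Finset.card_empty, Nat.cast_zero, mul_zero, zero_mul] at h1
    have hTO := eq_of_opNorm_sub_nonpos (κ := κ) h1
    have hsupp : SupportedIn κ (fatten G (∅ : Finset Γ) 1) (T O) := by
      rw [hTO]
      exact condExp_supportedIn κ _ _
    have h2 := hT'al (fatten G (∅ : Finset Γ) 1) 1 le_rfl (T O) hsupp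
    simp only [fatten_empty, Finset.card_empty, Nat.cast_zero, mul_zero, zero_mul] at h2
    simp only [fatten_empty, Finset.card_empty, Nat.cast_zero, mul_zero, zero_mul]
    exact h2
  · have hXcard : (1 : ℝ) ≤ (X.card : ℝ) := by
      have hpos : 0 < X.card := Finset.card_pos.mpr (Finset.nonempty_iff_ne_empty.mpr hX)
      exact_mod_cast hpos
    have hO0 : (0:ℝ) ≤ opNorm O := opNorm_nonneg' κ O
    by_cases hr1 : r ≤ 1
    · have hmr : 2 ≤ mAux (max CΓ 0) d m₁ m₂ r := by
        rw [mAux, if_pos hr1]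
        have h1 := hm₁.1 1
        have h3 := hAux_nonneg (d := d) (le_max_right CΓ 0) hm₂ 1
        linarith
      have hE := condExp_opNorm_le κ (fatten G X r) (T' (T O)) hcfg
      have htri : opNorm (T' (T O) - condExp κ (fatten G X r) (T' (T O))) ≤
          opNorm (T' (T O)) + opNorm (condExp κ (fatten G X r) (T' (T O))) :=
        opNorm_sub_le' κ _ _
      have hTO : opNorm (T' (T O)) ≤ opNorm O := le_trans (hT'con _) (hTcon O)
      have hcm : (2:ℝ) ≤ (X.card : ℝ) * mAux (max CΓ 0) d m₁ m₂ r := by nlinarith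
      nlinarith
    · -- main case : r ≥ 2
      have hk1 : 1 ≤ r / 2 := by omega
      have hs1 : 1 ≤ r - r / 2 := by omega
      have hks : r / 2 ≤ r - r / 2 := by omega
      have hsum : r / 2 + (r - r / 2) = r := by omega
      have hY12 : fatten G (fatten G X (r / 2)) (r - r / 2) ⊆ fatten G X r := by
        conv_rhs => rw [← hsum]
        exact fatten_fatten_subset G hconn X (r / 2) (r - r / 2)
      have h1 : opNorm (T O - condExp κ (fatten G X (r / 2)) (T O)) ≤
          opNorm O * (X.card : ℝ) * m₁ (r / 2) := hTal X (r / 2) hk1 O hO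
      have hBsupp : SupportedIn κ (fatten G X (r / 2))
          (condExp κ (fatten G X (r / 2)) (T O)) := condExp_supportedIn κ _ _
      have h2 := hT'al (fatten G X (r / 2)) (r - r / 2) hs1
        (condExp κ (fatten G X (r / 2)) (T O)) hBsupp
      have hBle : opNorm (condExp κ (fatten G X (r / 2)) (T O)) ≤ opNorm (T O) :=
        condExp_opNorm_le κ _ _ hcfg
      have hAle : opNorm (T O) ≤ opNorm O := hTcon O
      have hcard : ((fatten G X (r / 2)).card : ℝ) ≤
          (X.card : ℝ) * (1 + max CΓ 0 * ((r / 2 : ℕ) : ℝ) ^ d) := card_fatten_le hdim X (r / 2)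
      have hm₂s : m₂ (r - r / 2) ≤ m₂ (r / 2) := hm₂.2.1 _ _ hks
      have hfix : condExp κ (fatten G X r)
            (condExp κ (fatten G (fatten G X (r / 2)) (r - r / 2))
              (T' (condExp κ (fatten G X (r / 2)) (T O))))
          = condExp κ (fatten G (fatten G X (r / 2)) (r - r / 2))
              (T' (condExp κ (fatten G X (r / 2)) (T O))) :=
        condExp_of_supported κ (fatten G X r) (fatten G (fatten G X (r / 2)) (r - r / 2))
          hY12 _ (condExp_supportedIn κ _ _) hcfg
      have hmid : opNorm (T' (condExp κ (fatten G X (r / 2)) (T O)) -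
            condExp κ (fatten G X r) (T' (condExp κ (fatten G X (r / 2)) (T O)))) ≤
          2 * (opNorm (condExp κ (fatten G X (r / 2)) (T O)) *
            ((fatten G X (r / 2)).card : ℝ) * m₂ (r - r / 2)) := by
        have hdecomp : T' (condExp κ (fatten G X (r / 2)) (T O)) -
              condExp κ (fatten G X r) (T' (condExp κ (fatten G X (r / 2)) (T O)))
            = (T' (condExp κ (fatten G X (r / 2)) (T O)) -
                condExp κ (fatten G (fatten G X (r / 2)) (r - r / 2))
                  (T' (condExp κ (fatten G X (r / 2)) (T O)))) -
              condExp κ (fatten G X r)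
                (T' (condExp κ (fatten G X (r / 2)) (T O)) -
                  condExp κ (fatten G (fatten G X (r / 2)) (r - r / 2))
                    (T' (condExp κ (fatten G X (r / 2)) (T O)))) := by
          rw [condExp_sub, hfix]
          abel
        rw [hdecomp]
        have ht := opNorm_sub_le' κ
          (T' (condExp κ (fatten G X (r / 2)) (T O)) -
            condExp κ (fatten G (fatten G X (r / 2)) (r - r / 2))
              (T' (condExp κ (fatten G X (r / 2)) (T O))))
          (condExp κ (fatten G X r)
            (T' (condExp κ (fatten G X (r / 2)) (T O)) -
              condExp κ (fatten G (fatten G X (r / 2)) (r - r / 2))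
                (T' (condExp κ (fatten G X (r / 2)) (T O)))))
        have hE := condExp_opNorm_le κ (fatten G X r)
          (T' (condExp κ (fatten G X (r / 2)) (T O)) -
            condExp κ (fatten G (fatten G X (r / 2)) (r - r / 2))
              (T' (condExp κ (fatten G X (r / 2)) (T O)))) hcfg
        linarith
      have hTsub : T' (T O) - T' (condExp κ (fatten G X (r / 2)) (T O)) =
          T' (T O - condExp κ (fatten G X (r / 2)) (T O)) := by
        have h := (IsLinearMap.mk' T' hT'lin).map_sub (T O)
          (condExp κ (fatten G X (r / 2)) (T O))
        simpa using h.symm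
      have hn1 : opNorm (T' (T O) - T' (condExp κ (fatten G X (r / 2)) (T O))) ≤
          opNorm O * (X.card : ℝ) * m₁ (r / 2) := by
        rw [hTsub]
        exact le_trans (hT'con _) h1
      have hdec2 : T' (T O) - condExp κ (fatten G X r) (T' (T O)) =
          (T' (T O) - T' (condExp κ (fatten G X (r / 2)) (T O))) +
            ((T' (condExp κ (fatten G X (r / 2)) (T O)) -
              condExp κ (fatten G X r) (T' (condExp κ (fatten G X (r / 2)) (T O)))) +
             condExp κ (fatten G X r)
               (T' (condExp κ (fatten G X (r / 2)) (T O)) - T' (T O))) := by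
        rw [condExp_sub]
        abel
      have hn3 : opNorm (condExp κ (fatten G X r)
            (T' (condExp κ (fatten G X (r / 2)) (T O)) - T' (T O))) ≤
          opNorm O * (X.card : ℝ) * m₁ (r / 2) := by
        refine le_trans (condExp_opNorm_le κ (fatten G X r) _ hcfg) ?_
        rw [opNorm_sub_comm', hTsub]
        exact le_trans (hT'con _) h1
      have htri2 : opNorm (T' (T O) - condExp κ (fatten G X r) (T' (T O))) ≤
          opNorm (T' (T O) - T' (condExp κ (fatten G X (r / 2)) (T O))) +
            (opNorm (T' (condExp κ (fatten G X (r / 2)) (T O)) -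
              condExp κ (fatten G X r) (T' (condExp κ (fatten G X (r / 2)) (T O)))) +
             opNorm (condExp κ (fatten G X r)
               (T' (condExp κ (fatten G X (r / 2)) (T O)) - T' (T O)))) := by
        rw [hdec2]
        refine le_trans (opNorm_add_le' κ _ _) ?_
        have h := opNorm_add_le' κ
          (T' (condExp κ (fatten G X (r / 2)) (T O)) -
            condExp κ (fatten G X r) (T' (condExp κ (fatten G X (r / 2)) (T O))))
          (condExp κ (fatten G X r)
            (T' (condExp κ (fatten G X (r / 2)) (T O)) - T' (T O)))
        linarith
      have hmid2 : opNorm (condExp κ (fatten G X (r / 2)) (T O)) *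
            ((fatten G X (r / 2)).card : ℝ) * m₂ (r - r / 2) ≤
          opNorm O * (X.card : ℝ) * hAux (max CΓ 0) d m₂ (r / 2) := by
        have hg : (1 + max CΓ 0 * ((r / 2 : ℕ) : ℝ) ^ d) * m₂ (r / 2) ≤
            hAux (max CΓ 0) d m₂ (r / 2) :=
          gAux_le_hAux (le_max_right CΓ 0) hm₂ (r / 2)
        have h0B : 0 ≤ opNorm (condExp κ (fatten G X (r / 2)) (T O)) := opNorm_nonneg' κ _
        have h0m : 0 ≤ m₂ (r - r / 2) := hm₂.1 _
        have h0mk : 0 ≤ m₂ (r / 2) := hm₂.1 _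
        have h0Y : (0:ℝ) ≤ ((fatten G X (r / 2)).card : ℝ) := Nat.cast_nonneg _
        have h0X : (0:ℝ) ≤ (X.card : ℝ) := Nat.cast_nonneg _
        have hOB : opNorm (condExp κ (fatten G X (r / 2)) (T O)) ≤ opNorm O :=
          le_trans hBle hAle
        have h0p : (0:ℝ) ≤ 1 + max CΓ 0 * ((r / 2 : ℕ) : ℝ) ^ d := by positivity
        calc opNorm (condExp κ (fatten G X (r / 2)) (T O)) *
              ((fatten G X (r / 2)).card : ℝ) * m₂ (r - r / 2)
            ≤ opNorm O * ((X.card : ℝ) * (1 + max CΓ 0 * ((r / 2 : ℕ) : ℝ) ^ d)) *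
                m₂ (r / 2) := by
              refine mul_le_mul (mul_le_mul hOB hcard h0Y hO0) hm₂s h0m ?_
              exact mul_nonneg hO0 (mul_nonneg h0X h0p)
          _ = opNorm O * (X.card : ℝ) *
                ((1 + max CΓ 0 * ((r / 2 : ℕ) : ℝ) ^ d) * m₂ (r / 2)) := by ring
          _ ≤ opNorm O * (X.card : ℝ) * hAux (max CΓ 0) d m₂ (r / 2) :=
              mul_le_mul_of_nonneg_left hg (mul_nonneg hO0 h0X)
      have hmr : mAux (max CΓ 0) d m₁ m₂ r =
          2 * m₁ (r / 2) + 2 * hAux (max CΓ 0) d m₂ (r / 2) := by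
        rw [mAux, if_neg hr1]
      rw [hmr]
      nlinarith [htri2, hn1, hmid, hn3, hmid2]

end Stability
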